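/- Let e_0, ..., e_{n-1} ∈ ℤ^n with e_i · e_j = -δ_{ij}. Let D_0 = e_0 - e_{I_0} and D_1 = e_1 - e_{I_1} be type-a classes (0 ∉ I_0, 1 ∉ I_1) with D_0 · D_1 = 1. Then D_0 + D_1 is of type b if and only if I_0 ∩ I_1 = {k} for some single element k with k ∉ {0,1}. -/
import Mathlib


open Finset

/-- The standard negative definite intersection form on `ℤ^n`. -/
def inter {n : ℕ} (x y : Fin n → ℤ) : ℤ := -∑ k, x k * y k

/-- The Donaldson class `e i`. -/
def E {n : ℕ} (i : Fin n) : Fin n → ℤ := Pi.single i 1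

/-- `e_I = ∑_{i ∈ I} e_i`. -/
def ES {n : ℕ} (I : Finset (Fin n)) : Fin n → ℤ := ∑ i ∈ I, E i

lemma ES_apply {n : ℕ} (I : Finset (Fin n)) (t : Fin n) :
    ES I t = if t ∈ I then 1 else 0 := by
  simp [ES, E, Finset.sum_apply, Pi.single_apply]

lemma inter_formula {n : ℕ} (i₀ i₁ : Fin n) (I₀ I₁ : Finset (Fin n)) :
    inter (E i₀ - ES I₀) (E i₁ - ES I₁) =
      -((if i₀ = i₁ then 1 else 0) - (if i₀ ∈ I₁ then 1 else 0)
        - (if i₁ ∈ I₀ then 1 else 0) + ((I₀ ∩ I₁).card : ℤ)) := by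
  have key : ∀ t : Fin n, (E i₀ - ES I₀) t * (E i₁ - ES I₁) t =
      (if t = i₀ then (if t = i₁ then (1:ℤ) else 0) else 0)
      - (if t = i₀ then (if t ∈ I₁ then (1:ℤ) else 0) else 0)
      - (if t = i₁ then (if t ∈ I₀ then (1:ℤ) else 0) else 0)
      + (if t ∈ I₀ ∩ I₁ then (1:ℤ) else 0) := by
    intro t
    simp only [Pi.sub_apply, E, ES_apply, Pi.single_apply, Finset.mem_inter]
    split_ifs <;> simp_all
  unfold inter
  rw [Finset.sum_congr rfl (fun t _ => key t)]
  rw [Finset.sum_add_distrib, Finset.sum_sub_distrib, Finset.sum_sub_distrib]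
  rw [Finset.sum_ite_eq' Finset.univ i₀ (fun t => if t = i₁ then (1:ℤ) else 0)]
  rw [Finset.sum_ite_eq' Finset.univ i₀ (fun t => if t ∈ I₁ then (1:ℤ) else 0)]
  rw [Finset.sum_ite_eq' Finset.univ i₁ (fun t => if t ∈ I₀ then (1:ℤ) else 0)]
  rw [Finset.sum_ite_mem Finset.univ (I₀ ∩ I₁) (fun _ => (1:ℤ))]
  simp

theorem stmt6 {n : ℕ} (i₀ i₁ : Fin n) (hne : i₀ ≠ i₁) (I₀ I₁ : Finset (Fin n))
    (h₀ : i₀ ∉ I₀) (h₁ : i₁ ∉ I₁)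
    (h : inter (E i₀ - ES I₀) (E i₁ - ES I₁) = 1) :
    (∃ (m : Fin n) (M : Finset (Fin n)), m ∉ M ∧
        (E i₀ - ES I₀) + (E i₁ - ES I₁) = (-2 : ℤ) • E m - ES M) ↔
      ∃ k : Fin n, k ≠ i₀ ∧ k ≠ i₁ ∧ I₀ ∩ I₁ = {k} := by
  rw [inter_formula] at h
  constructor
  · rintro ⟨m, M, hmM, heq⟩
    have point : ∀ t : Fin n,
        (if t = i₀ then (1:ℤ) else 0) - (if t ∈ I₀ then (1:ℤ) else 0)
        + ((if t = i₁ then (1:ℤ) else 0) - (if t ∈ I₁ then (1:ℤ) else 0))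
        = -(if t = m then (2:ℤ) else 0) - (if t ∈ M then (1:ℤ) else 0) := by
      intro t
      have := congrFun heq t
      simpa [E, ES_apply, Pi.single_apply, smul_eq_mul] using this
    have hmem0 : i₀ ∈ I₁ := by
      by_contra hc
      have := point i₀
      simp [h₀, hne, hc] at this
      split_ifs at this <;> omega
    have hmem1 : i₁ ∈ I₀ := by
      by_contra hc
      have := point i₁
      simp [h₁, hne.symm, hc] at this
      split_ifs at this <;> omega
    simp [hne, hmem0, hmem1] at h
    have hcard : (I₀ ∩ I₁).card = 1 := by omega
    obtain ⟨k, hk⟩ := Finset.card_eq_one.mp hcard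
    have hkmem : k ∈ I₀ ∩ I₁ := hk ▸ Finset.mem_singleton_self k
    rw [Finset.mem_inter] at hkmem
    exact ⟨k, fun e => h₀ (e ▸ hkmem.1), fun e => h₁ (e ▸ hkmem.2), hk⟩
  · rintro ⟨k, hk0, hk1, hIk⟩
    have hcard : (I₀ ∩ I₁).card = 1 := by rw [hIk]; simp
    have hkmem : k ∈ I₀ ∩ I₁ := hIk ▸ Finset.mem_singleton_self k
    rw [Finset.mem_inter] at hkmem
    obtain ⟨hkI0, hkI1⟩ := hkmem
    have hmem0 : i₀ ∈ I₁ := by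
      by_contra hc
      simp [hne, hc, hcard] at h
      split_ifs at h <;> omega
    have hmem1 : i₁ ∈ I₀ := by
      by_contra hc
      simp [hne, hc, hcard] at h
      split_ifs at h <;> omega
    have hint : ∀ t : Fin n, t ∈ I₀ ∧ t ∈ I₁ ↔ t = k := by
      intro t
      rw [← Finset.mem_singleton, ← hIk, Finset.mem_inter]
    refine ⟨k, (I₀ ∪ I₁) \ {i₀, i₁, k}, by simp, ?_⟩
    funext t
    have ht := hint t
    simp only [Pi.add_apply, Pi.sub_apply, Pi.smul_apply, E, ES_apply,
      Pi.single_apply, smul_eq_mul, Finset.mem_sdiff, Finset.mem_union,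
      Finset.mem_insert, Finset.mem_singleton]
    split_ifs <;> simp_all <;> omega
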